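/- Let A be an artin algebra, and let 𝒞 and 𝒟 be components of Γ_A with the same composition factors such that 𝒞 ≠ 𝒟 and 𝒞 does not lie on a short cycle in the component quiver Σ_A. Then 𝒞 is a semi-regular component of Γ_A, i.e., 𝒞 does not contain both a projective module and an injective module. -/

import Mathlib

/-!
# Common framework: Auslander–Reiten theory for artin algebras

We work with right `A`-modules, realized as objects of `ModuleCat Aᵐᵒᵖ`.
We develop: finitely generated indecomposable modules, the (infinite) radical of
the module category, irreducible morphisms, almost split sequences and the
Auslander–Reiten translation, components of the Auslander–Reiten quiver, the
component quiver `Σ_A`, composition factors and the condition `[M] = [N]`,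
translation quivers, stable tubes, ray/coray tubes (via ray insertions),
separating families of components, and (almost) concealed canonical algebras
(via the Lenzing–de la Peña characterization).
-/

open CategoryTheory MulOpposite CategoryTheory.Limits

namespace ARTheory

/-- The category of right `A`-modules (as left `Aᵐᵒᵖ`-modules), in `Type 0`. -/
abbrev RMod (A : Type) [Ring A] : Type 1 := ModuleCat.{0} Aᵐᵒᵖ

variable {A : Type} [Ring A]

/-- `M` is a finitely generated right `A`-module. -/
def fgMod (M : RMod A) : Prop := Module.Finite Aᵐᵒᵖ M

/-- `M` is an indecomposable module: it is nonzero and its endomorphism ring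
has no nontrivial idempotents. -/
def Indec (M : RMod A) : Prop :=
  (¬ Subsingleton M) ∧ ∀ e : M ⟶ M, e ≫ e = e → e = 0 ∨ e = 𝟙 M

/-- A vertex of the Auslander–Reiten quiver `Γ_A`: a finitely generated
indecomposable right `A`-module. -/
def Vertex (M : RMod A) : Prop := fgMod M ∧ Indec M

/-- `f` is a section (split monomorphism). -/
def IsSectionHom {X Y : RMod A} (f : X ⟶ Y) : Prop := ∃ r : Y ⟶ X, f ≫ r = 𝟙 X

/-- `f` is a retraction (split epimorphism). -/
def IsRetractionHom {X Y : RMod A} (f : X ⟶ Y) : Prop := ∃ s : Y ⟶ X, s ≫ f = 𝟙 Y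

/-- Irreducible morphism in `mod A`. -/
def Irred {X Y : RMod A} (f : X ⟶ Y) : Prop :=
  ¬ IsSectionHom f ∧ ¬ IsRetractionHom f ∧
  ∀ (Z : RMod A), fgMod Z → ∀ (g : X ⟶ Z) (h : Z ⟶ Y), f = g ≫ h →
    IsSectionHom g ∨ IsRetractionHom h

/-- Arrow of the Auslander–Reiten quiver: an irreducible morphism between
finitely generated indecomposable modules. -/
def ARArrow (M N : RMod A) : Prop :=
  Vertex M ∧ Vertex N ∧ ∃ f : M ⟶ N, Irred f

/-- `f` belongs to the Jacobson radical `rad_A` of `mod A`: no composition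
through `f` between indecomposables is an isomorphism. -/
def InRad {X Y : RMod A} (f : X ⟶ Y) : Prop :=
  ∀ (Z : RMod A), fgMod Z → Indec Z → ∀ (g : Z ⟶ X) (h : Y ⟶ Z), ¬ IsIso (g ≫ f ≫ h)

/-- `RadComp n f` : `f` is a composite of `n+1` radical morphisms (through
finitely generated modules). -/
def RadComp : ℕ → ∀ {X Y : RMod A}, (X ⟶ Y) → Prop
  | 0, _, _, f => InRad f
  | n+1, _, _, f => ∃ (Z : RMod A) (g : _ ⟶ Z) (h : Z ⟶ _),
      fgMod Z ∧ InRad g ∧ RadComp n h ∧ f = g ≫ h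

/-- `f ∈ rad_A^{n+1}(X, Y)` : `f` is a sum of composites of `n+1` radical morphisms. -/
def InRadPow (n : ℕ) {X Y : RMod A} (f : X ⟶ Y) : Prop :=
  f ∈ AddSubgroup.closure {g : X ⟶ Y | RadComp n g}

/-- `f ∈ rad_A^∞(X, Y)`, the infinite radical of `mod A` (intersection of all
powers of the radical). -/
def InRadInf {X Y : RMod A} (f : X ⟶ Y) : Prop := ∀ n : ℕ, InRadPow n f

/-- Generating relation for the components of `Γ_A`: isomorphism or an arrow in
either direction. -/
def ARRel (M N : RMod A) : Prop :=
  Vertex M ∧ Vertex N ∧ (Nonempty (M ≅ N) ∨ ARArrow M N ∨ ARArrow N M)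

/-- `M` and `N` lie in the same connected component of `Γ_A`. -/
def SameComp : RMod A → RMod A → Prop := Relation.ReflTransGen ARRel

/-- `C` is (the set of modules belonging to) a connected component of the
Auslander–Reiten quiver `Γ_A`. -/
def IsComponent (C : Set (RMod A)) : Prop :=
  ∃ M, Vertex M ∧ C = {N | Vertex N ∧ SameComp M N}

/-- Arrow `C → D` of the component quiver `Σ_A`:
`rad_A^∞(X, Y) ≠ 0` for some `X ∈ C`, `Y ∈ D`. -/
def SigmaArrow (C D : Set (RMod A)) : Prop :=
  ∃ X ∈ C, ∃ Y ∈ D, ∃ f : X ⟶ Y, f ≠ 0 ∧ InRadInf f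

/-- `C` lies on a short cycle `C → D → C` (possibly `C = D`) in the component
quiver `Σ_A`. -/
def OnShortCycleSigma (C : Set (RMod A)) : Prop :=
  ∃ D, IsComponent D ∧ SigmaArrow C D ∧ SigmaArrow D C

/-- `C` is a generalized standard component: `rad_A^∞(X, Y) = 0` for all `X, Y ∈ C`. -/
def GenStandard (C : Set (RMod A)) : Prop :=
  ∀ X ∈ C, ∀ Y ∈ C, ∀ f : X ⟶ Y, InRadInf f → f = 0

section CompositionFactors

/-- The successive subquotient of a filtration. -/
abbrev subquot {M : RMod A} (X Y : Submodule Aᵐᵒᵖ M) :=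
  Y ⧸ Submodule.comap Y.subtype X

/-- `[M] = [N]` in `K_0(A)` : `M` and `N` have the same composition factors,
including multiplicities: there are composition series of `M` and of `N` whose
simple factors match up to a permutation and isomorphism. -/
def SameCF (M N : RMod A) : Prop :=
  ∃ (n : ℕ) (s : Fin (n+1) → Submodule Aᵐᵒᵖ M) (t : Fin (n+1) → Submodule Aᵐᵒᵖ N)
    (σ : Equiv.Perm (Fin n)),
    Monotone s ∧ Monotone t ∧
    s 0 = ⊥ ∧ s (Fin.last n) = ⊤ ∧ t 0 = ⊥ ∧ t (Fin.last n) = ⊤ ∧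
    (∀ i : Fin n, IsSimpleModule Aᵐᵒᵖ (subquot (s i.castSucc) (s i.succ))) ∧
    (∀ i : Fin n, IsSimpleModule Aᵐᵒᵖ (subquot (t i.castSucc) (t i.succ))) ∧
    ∀ i : Fin n, Nonempty
      ((subquot (s i.castSucc) (s i.succ)) ≃ₗ[Aᵐᵒᵖ]
        (subquot (t ((σ i).castSucc)) (t ((σ i).succ))))

/-- Two components `C` and `D` of `Γ_A` have the same composition factors:
for any `x ∈ K_0(A)`, `x = [M]` for an indecomposable `M ∈ C` iff `x = [N]`
for an indecomposable `N ∈ D`. -/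
def ComponentsSameCF (C D : Set (RMod A)) : Prop :=
  (∀ M ∈ C, ∃ N ∈ D, SameCF M N) ∧ (∀ N ∈ D, ∃ M ∈ C, SameCF M N)

/-- The simple module `S` is a composition factor of `M`. -/
def IsCompFactorOf (S M : RMod A) : Prop :=
  IsSimpleModule Aᵐᵒᵖ S ∧ ∃ (X Y : Submodule Aᵐᵒᵖ M), X ≤ Y ∧
    Nonempty ((subquot X Y) ≃ₗ[Aᵐᵒᵖ] S)

end CompositionFactors

section AlmostSplit

/-- `0 → N → E → M → 0` is a short exact sequence. -/
def SES {X Y Z : RMod A} (f : X ⟶ Y) (g : Y ⟶ Z) : Prop :=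
  Function.Injective f ∧ Function.Surjective g ∧ ∀ y : Y, g y = 0 ↔ ∃ x : X, f x = y

/-- `0 → N → E → M → 0` is an almost split (Auslander–Reiten) sequence. -/
def IsAlmostSplit {N E M : RMod A} (f : N ⟶ E) (g : E ⟶ M) : Prop :=
  Vertex N ∧ Vertex M ∧ fgMod E ∧ SES f g ∧ ¬ IsRetractionHom g ∧
  ∀ (Z : RMod A), fgMod Z → ∀ h : Z ⟶ M, ¬ IsRetractionHom h → ∃ k : Z ⟶ E, k ≫ g = h

/-- `ARTranslate N M` : `N = τ_A M = D Tr M`, i.e. there is an almost split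
sequence `0 → N → E → M → 0`. -/
def ARTranslate (N M : RMod A) : Prop :=
  ∃ (E : RMod A) (f : N ⟶ E) (g : E ⟶ M), IsAlmostSplit f g

end AlmostSplit

section TranslationQuivers

/-- An abstract translation quiver: vertices, arrows, and the translation
(`tau a b` meaning `b = τ a`; `a` is projective when no such `b` exists). -/
structure TransQuiver : Type 1 where
  V : Type
  Arrow : V → V → Prop
  tau : V → V → Prop

/-- The stable tube `ℤA_∞/(τ^r)`: vertices `(i, j)` with `i ∈ ℤ/r` (the τ-orbit)
and `j ≥ 0` (the level, `j = 0` being the mouth); arrows `(i,j) → (i,j+1)` and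
`(i,j+1) → (i+1,j)`; translation `τ(i,j) = (i-1,j)`. -/
def tubeTQ (r : ℕ) : TransQuiver where
  V := ZMod r × ℕ
  Arrow p q := (q.1 = p.1 ∧ q.2 = p.2 + 1) ∨ (p.2 = q.2 + 1 ∧ q.1 = p.1 + 1)
  tau p q := q.1 = p.1 - 1 ∧ q.2 = p.2

/-- The opposite translation quiver (arrows reversed, translation inverted). -/
def TransQuiver.op (Γ : TransQuiver) : TransQuiver where
  V := Γ.V
  Arrow a b := Γ.Arrow b a
  tau a b := Γ.tau b a

/-- A ray (infinite sectional path, maximal at its start) in a translation quiver. -/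
structure IsRay (Γ : TransQuiver) (x : ℕ → Γ.V) : Prop where
  inj : Function.Injective x
  arr : ∀ j, Γ.Arrow (x j) (x (j+1))
  sectional : ∀ j, ¬ Γ.tau (x (j+2)) (x j)
  maximal : ∀ w, Γ.Arrow w (x 0) → Γ.tau (x 1) w

/-- The ray insertion of a translation quiver `Γ` at a ray `x₀ → x₁ → ⋯`:
a new ray of vertices `y₀ → y₁ → ⋯` is inserted, with `y₀` a new projective
vertex; there are new arrows `x_j → y_j`, the arrows `x_j → z` with `z` off the
ray are replaced by arrows `y_j → z`, and the translation is rearranged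
accordingly (`τ y_{j+1} = x_j`, and `τ z = y_{j-1}` for the off-ray successors
`z` of `x_j`). -/
def rayInsert (Γ : TransQuiver) (x : ℕ → Γ.V) : TransQuiver where
  V := Γ.V ⊕ ℕ
  Arrow a b :=
    match a, b with
    | .inl a, .inl b => Γ.Arrow a b ∧ ∀ j, a = x (j+1) → b = x (j+2)
    | .inl a, .inr k => a = x k
    | .inr k, .inl b => ∃ j, k = j + 1 ∧ Γ.Arrow (x (j+1)) b ∧ b ≠ x (j+2)
    | .inr k, .inr l => l = k + 1
  tau a b :=
    match a, b with
    | .inl a, .inl b => Γ.tau a b ∧ ¬ (∃ j, Γ.Arrow (x (j+1)) a ∧ a ≠ x (j+2))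
    | .inl a, .inr k => Γ.Arrow (x (k+1)) a ∧ a ≠ x (k+2)
    | .inr k, .inl b => ∃ j, k = j + 1 ∧ b = x j
    | .inr _, .inr _ => False

/-- Ray tubes: the translation quivers obtained from a stable tube by a finite
(possibly empty) number of ray insertions. -/
inductive IsRayTubeTQ : TransQuiver → Prop
  | base (r : ℕ) (hr : 0 < r) : IsRayTubeTQ (tubeTQ r)
  | insert (Γ : TransQuiver) (x : ℕ → Γ.V) :
      IsRayTubeTQ Γ → IsRay Γ x → IsRayTubeTQ (rayInsert Γ x)

/-- The set of modules `C` realizes the translation quiver `Γ`: there is a map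
from `C` onto the vertices of `Γ`, two modules having the same image iff they
are isomorphic, which identifies the arrows of `Γ_A` between modules of `C`
with the arrows of `Γ` and the Auslander–Reiten translation with the
translation of `Γ`. -/
def Represents (C : Set (RMod A)) (Γ : TransQuiver) : Prop :=
  ∃ φ : RMod A → Γ.V,
    (∀ v : Γ.V, ∃ M ∈ C, φ M = v) ∧
    (∀ M ∈ C, ∀ N ∈ C, (φ M = φ N ↔ Nonempty (M ≅ N))) ∧
    (∀ M ∈ C, ∀ N ∈ C, (ARArrow M N ↔ Γ.Arrow (φ M) (φ N))) ∧
    (∀ M ∈ C, ∀ N ∈ C, (ARTranslate N M ↔ Γ.tau (φ M) (φ N)))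

/-- `C` is a stable tube of rank `r` in `Γ_A`. -/
def IsStableTube (C : Set (RMod A)) (r : ℕ) : Prop :=
  0 < r ∧ IsComponent C ∧ Represents C (tubeTQ r)

/-- `C` is a ray tube in `Γ_A` (obtained from a stable tube by a finite,
possibly empty, number of ray insertions). -/
def IsRayTube (C : Set (RMod A)) : Prop :=
  IsComponent C ∧ ∃ Γ : TransQuiver, IsRayTubeTQ Γ ∧ Represents C Γ

/-- `C` is a coray tube in `Γ_A` (obtained from a stable tube by a finite,
possibly empty, number of coray insertions); equivalently, the translation
quiver of `C` is opposite to a ray tube. -/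
def IsCorayTube (C : Set (RMod A)) : Prop :=
  IsComponent C ∧ ∃ Γ : TransQuiver, IsRayTubeTQ Γ ∧ Represents C Γ.op

/-- `M` lies on the mouth of the component `C`: it has exactly one immediate
predecessor and one immediate successor in `C` (up to isomorphism). -/
def IsMouth (C : Set (RMod A)) (M : RMod A) : Prop :=
  M ∈ C ∧ (∃ P ∈ C, ARArrow P M) ∧ (∃ S ∈ C, ARArrow M S) ∧
  (∀ P ∈ C, ∀ P' ∈ C, ARArrow P M → ARArrow P' M → Nonempty (P ≅ P')) ∧
  (∀ S ∈ C, ∀ S' ∈ C, ARArrow M S → ARArrow M S' → Nonempty (S ≅ S'))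

end TranslationQuivers

/-- `C` is semi-regular: it does not contain both a projective module and an
injective module. -/
def SemiRegular (C : Set (RMod A)) : Prop :=
  ¬ ((∃ P ∈ C, Projective P) ∧ (∃ I ∈ C, Injective I))

/-- `C` admits an external short path: a path `U → V → W` of nonzero
nonisomorphisms in `mod A` with `U, W ∈ C` and `V` (indecomposable) not in `C`. -/
def HasExternalShortPath (C : Set (RMod A)) : Prop :=
  ∃ U ∈ C, ∃ W ∈ C, ∃ V : RMod A, Vertex V ∧ V ∉ C ∧
    ∃ (g : U ⟶ V) (h : V ⟶ W), g ≠ 0 ∧ h ≠ 0 ∧ ¬ IsIso g ∧ ¬ IsIso h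

/-- `C` is a cyclic component: every module of `C` lies on an oriented cycle of
arrows of `Γ_A` contained in `C`. -/
def CyclicComponent (C : Set (RMod A)) : Prop :=
  ∀ M ∈ C, ∃ (n : ℕ) (p : Fin (n+2) → RMod A),
    p 0 = M ∧ p (Fin.last (n+1)) = M ∧ (∀ i, p i ∈ C) ∧
    ∀ i : Fin (n+1), ARArrow (p i.castSucc) (p i.succ)

section Separating

/-- `Γ_A = P ∨ T ∨ Q` with `T` a family of components separating `P` from `Q`:
the components split into `P`, `T`, `Q`; the components of `T` are pairwise
orthogonal and generalized standard; `Hom(T, P) = 0`, `Hom(Q, T) = 0`,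
`Hom(Q, P) = 0`; and every morphism from a module of `P` to a module of `Q`
factors through a finite direct sum of modules of any prescribed component of `T`. -/
structure IsSeparatingFamily (P T Q : Set (Set (RMod A))) : Prop where
  compP : ∀ C ∈ P, IsComponent C
  compT : ∀ C ∈ T, IsComponent C
  compQ : ∀ C ∈ Q, IsComponent C
  cover : ∀ C : Set (RMod A), IsComponent C → C ∈ P ∨ C ∈ T ∨ C ∈ Q
  disjPT : P ∩ T = ∅
  disjPQ : P ∩ Q = ∅
  disjTQ : T ∩ Q = ∅
  orth : ∀ C ∈ T, ∀ D ∈ T, C ≠ D → ∀ X ∈ C, ∀ Y ∈ D, ∀ f : X ⟶ Y, f = 0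
  gstd : ∀ C ∈ T, GenStandard C
  homTP : ∀ C ∈ T, ∀ D ∈ P, ∀ X ∈ C, ∀ Y ∈ D, ∀ f : X ⟶ Y, f = 0
  homQT : ∀ C ∈ Q, ∀ D ∈ T, ∀ X ∈ C, ∀ Y ∈ D, ∀ f : X ⟶ Y, f = 0
  homQP : ∀ C ∈ Q, ∀ D ∈ P, ∀ X ∈ C, ∀ Y ∈ D, ∀ f : X ⟶ Y, f = 0
  factor : ∀ C ∈ T, ∀ CP ∈ P, ∀ CQ ∈ Q, ∀ X ∈ CP, ∀ Y ∈ CQ, ∀ f : X ⟶ Y,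
    ∃ (k : ℕ) (Z : Fin k → RMod A) (_ : ∀ i, Z i ∈ C)
      (g : X ⟶ ⨁ Z) (h : (⨁ Z) ⟶ Y), f = g ≫ h

/-- An artin algebra is concealed canonical iff its Auslander–Reiten quiver
admits a separating family of stable tubes (Lenzing–de la Peña). -/
def IsConcealedCanonical (B : Type) [Ring B] : Prop :=
  ∃ P T Q : Set (Set (RMod B)),
    IsSeparatingFamily P T Q ∧ ∀ C ∈ T, ∃ r : ℕ, IsStableTube C r

/-- An artin algebra is almost concealed canonical iff its Auslander–Reiten
quiver admits a separating family of ray tubes. -/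
def IsAlmostConcealedCanonical (B : Type) [Ring B] : Prop :=
  ∃ P T Q : Set (Set (RMod B)),
    IsSeparatingFamily P T Q ∧ ∀ C ∈ T, IsRayTube C

end Separating

section Annihilators

/-- The annihilator `ann_A(C)` of a family of modules `C`, as a subset of `A`. -/
def annSet (C : Set (RMod A)) : Set A :=
  {a : A | ∀ M ∈ C, ∀ m : M, (op a) • m = 0}

/-- `C` is a faithful family of modules: `ann_A(C) = 0`. -/
def FaithfulFamily (C : Set (RMod A)) : Prop := annSet C = {0}

end Annihilators

section Restriction

variable {B : Type} [Ring B]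

/-- Restriction of scalars `mod B → mod A` along a ring homomorphism
`π : A → B` (for right modules). -/
noncomputable def res (π : A →+* B) : RMod B ⥤ RMod A :=
  ModuleCat.restrictScalars (RingHom.op π)

/-- The component `C'` of `Γ_B` corresponds, under restriction of scalars along
the surjection `π : A → B`, to the component `C` of `Γ_A` (i.e. `C` is the
closure under isomorphism of the image of `C'`). -/
noncomputable def Corresponds (π : A →+* B) (C' : Set (RMod B)) (C : Set (RMod A)) : Prop :=
  (∀ M' ∈ C', (res π).obj M' ∈ C) ∧
  ∀ M ∈ C, ∃ M' ∈ C', Nonempty ((res π).obj M' ≅ M)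

end Restriction

section HomologicalAlgebra

/-- `Ext¹_A(X, Y) = 0`: every short exact sequence `0 → Y → E → X → 0` splits. -/
def Ext1Vanishes (X Y : RMod A) : Prop :=
  ∀ (E : RMod A) (f : Y ⟶ E) (g : E ⟶ X), SES f g → IsRetractionHom g

/-- `Ext²_A(X, Y) = 0`: `Ext¹` vanishes on any first syzygy of `X`. -/
def Ext2Vanishes (X Y : RMod A) : Prop :=
  ∀ (Ω P : RMod A) (f : Ω ⟶ P) (g : P ⟶ X), Projective P → SES f g → Ext1Vanishes Ω Y

/-- `X` has projective dimension at most one. -/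
def PdLeOne (X : RMod A) : Prop :=
  ∃ (P₁ P₀ : RMod A) (f : P₁ ⟶ P₀) (g : P₀ ⟶ X),
    Projective P₁ ∧ Projective P₀ ∧ SES f g

/-- The radical of a module: the intersection of its maximal submodules. -/
def radM (M : RMod A) : Submodule Aᵐᵒᵖ M := sInf {m | IsCoatom m}

/-- The socle of a module: the sum of its simple submodules. -/
def socM (M : RMod A) : Submodule Aᵐᵒᵖ M := sSup {m | IsAtom m}

/-- The top of a module: `top M = M / rad M`. -/
abbrev topM (M : RMod A) := M ⧸ radM M

end HomologicalAlgebra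

end ARTheory

/-!
A morphism between modules of different components of `Γ_A` is radical but not irreducible, so it
factors through a module `Z` by a non-section followed by a non-retraction. Splitting `Z` into
indecomposable summands, each summand lies outside the component of the source or of the target,
and induction shows that the morphism lies in every power of the radical, i.e. in `rad_A^∞`.

If `𝒞` contained a projective `P` and an injective `I`, choose `N, N' ∈ 𝒟` with `[N] = [P]` and
`[N'] = [I]`. The top composition factor of `P` is a subquotient of `N`, so projectivity of `P`
gives a nonzero map `P → N`; dually the bottom factor of `I` gives a nonzero map `N' → I`. Since
`𝒞 ≠ 𝒟`, both maps lie in `rad_A^∞`, and `𝒞 → 𝒟 → 𝒞` is a short cycle in `Σ_A`.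
-/

universe v

theorem exists_ne_zero_hom_of_projective {𝒜 : Type*} [Category 𝒜] [HasZeroMorphisms 𝒜]
    {P E Q N : 𝒜} [Projective P] (q : E ⟶ Q) [Epi q] (i : E ⟶ N) [Mono i] {w : P ⟶ Q}
    (hw : w ≠ 0) : ∃ f : P ⟶ N, f ≠ 0 := by
  refine ⟨Projective.factorThru w q ≫ i, fun h => hw ?_⟩
  have hlift : Projective.factorThru w q = 0 := by rw [← cancel_mono i, h, zero_comp]
  rw [← Projective.factorThru_comp w q, hlift, zero_comp]

theorem exists_ne_zero_hom_of_injective {𝒜 : Type*} [Category 𝒜] [HasZeroMorphisms 𝒜]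
    {I E Q N : 𝒜} [Injective I] (q : E ⟶ Q) [Epi q] (i : E ⟶ N) [Mono i] {w : Q ⟶ I}
    (hw : w ≠ 0) : ∃ f : N ⟶ I, f ≠ 0 := by
  refine ⟨Injective.factorThru (q ≫ w) i, fun h => hw ?_⟩
  rw [← cancel_epi q, ← Injective.comp_factorThru (q ≫ w) i, h, comp_zero, comp_zero]

theorem ModuleCat.ofHom_ne_zero {R : Type*} [Ring R] {X Y : Type v} [AddCommGroup X] [Module R X]
    [AddCommGroup Y] [Module R Y] {f : X →ₗ[R] Y} (hf : f ≠ 0) :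
    ModuleCat.ofHom f ≠ 0 :=
  fun h => hf (by simpa using congrArg ModuleCat.Hom.hom h)

namespace ARTheory

variable {A : Type} [Ring A]

section Indecomposable

theorem Indec.isIso_of_retract {X Z : RMod A} (hX : Indec X) (hZ : ¬ Subsingleton Z)
    (s : Z ⟶ X) (r : X ⟶ Z) (h : s ≫ r = 𝟙 Z) : IsIso s := by
  have hidem : (r ≫ s) ≫ (r ≫ s) = r ≫ s := by
    rw [Category.assoc, ← Category.assoc s, h, Category.id_comp]
  rcases hX.2 (r ≫ s) hidem with h0 | h1
  · refine absurd (ModuleCat.isZero_iff_subsingleton.mp ?_) hZ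
    rw [IsZero.iff_id_eq_zero]
    calc 𝟙 Z = (s ≫ r) ≫ (s ≫ r) := by rw [h, Category.id_comp]
      _ = s ≫ (r ≫ s) ≫ r := by simp only [Category.assoc]
      _ = 0 := by rw [h0, zero_comp, comp_zero]
  · exact ⟨r, h, h1⟩

theorem Indec.isIso_of_not_inRad {X Y : RMod A} (hX : Indec X) (hY : Indec Y) {f : X ⟶ Y}
    (hf : ¬ InRad f) : IsIso f := by
  simp only [InRad, not_forall, not_not] at hf
  obtain ⟨Z, -, hZ, a, b, hiso⟩ := hf
  have : IsIso a := hX.isIso_of_retract hZ.1 a (f ≫ b ≫ inv (a ≫ f ≫ b)) (by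
    simpa only [Category.assoc] using IsIso.hom_inv_id (a ≫ f ≫ b))
  have hXY : f ≫ b ≫ inv (a ≫ f ≫ b) ≫ a = 𝟙 X := by
    rw [← cancel_epi a, Category.comp_id]
    simpa only [Category.assoc, Category.id_comp] using
      congrArg (· ≫ a) (IsIso.hom_inv_id (a ≫ f ≫ b))
  exact hY.isIso_of_retract hX.1 f _ hXY

theorem inRad_of_not_isSectionHom {X Y : RMod A} (hX : Indec X) (hY : Indec Y) {f : X ⟶ Y}
    (hf : ¬ IsSectionHom f) : InRad f := by
  by_contra h
  have := hX.isIso_of_not_inRad hY h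
  exact hf ⟨inv f, IsIso.hom_inv_id f⟩

theorem inRad_of_not_isRetractionHom {X Y : RMod A} (hX : Indec X) (hY : Indec Y) {f : X ⟶ Y}
    (hf : ¬ IsRetractionHom f) : InRad f := by
  by_contra h
  have := hX.isIso_of_not_inRad hY h
  exact hf ⟨inv f, IsIso.inv_hom_id f⟩

theorem not_isSectionHom_comp {X Y Z : RMod A} {f : X ⟶ Y} (hf : ¬ IsSectionHom f)
    (g : Y ⟶ Z) : ¬ IsSectionHom (f ≫ g) :=
  fun ⟨r, hr⟩ => hf ⟨g ≫ r, by rw [← hr, Category.assoc]⟩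

theorem not_isRetractionHom_comp {X Y Z : RMod A} {g : Y ⟶ Z} (hg : ¬ IsRetractionHom g)
    (f : X ⟶ Y) : ¬ IsRetractionHom (f ≫ g) :=
  fun ⟨s, hs⟩ => hg ⟨s ≫ f, by rw [← hs, Category.assoc]⟩

end Indecomposable

section Components

instance : Std.Symm (ARRel (A := A)) where
  symm _ _ := fun ⟨hX, hY, h⟩ => ⟨hY, hX, h.imp (Nonempty.map Iso.symm) Or.symm⟩

theorem sameComp_symm {X Y : RMod A} (h : SameComp X Y) : SameComp Y X :=
  Std.Symm.symm (r := Relation.ReflTransGen ARRel) X Y h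

theorem IsComponent.vertex_of_mem {C : Set (RMod A)} (hC : IsComponent C) {M : RMod A}
    (hM : M ∈ C) : Vertex M := by
  obtain ⟨M₀, -, rfl⟩ := hC
  exact hM.1

theorem IsComponent.eq_of_sameComp {C D : Set (RMod A)} (hC : IsComponent C)
    (hD : IsComponent D) {X Y : RMod A} (hX : X ∈ C) (hY : Y ∈ D) (h : SameComp X Y) :
    C = D := by
  obtain ⟨M, -, rfl⟩ := hC
  obtain ⟨N, -, rfl⟩ := hD
  have hMN : SameComp M N := (hX.2.trans h).trans (sameComp_symm hY.2)
  ext L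
  exact ⟨fun ⟨hL, hML⟩ => ⟨hL, (sameComp_symm hMN).trans hML⟩,
    fun ⟨hL, hNL⟩ => ⟨hL, hMN.trans hNL⟩⟩

theorem inRad_of_not_sameComp {X Y : RMod A} (hX : Vertex X) (hY : Vertex Y)
    (hXY : ¬ SameComp X Y) (f : X ⟶ Y) : InRad f := by
  by_contra h
  have := hX.2.isIso_of_not_inRad hY.2 h
  exact hXY (Relation.ReflTransGen.single ⟨hX, hY, Or.inl ⟨asIso f⟩⟩)

theorem exists_nonsplit_factorization_of_not_sameComp {X Y : RMod A} (hX : Vertex X)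
    (hY : Vertex Y) (hXY : ¬ SameComp X Y) (f : X ⟶ Y) :
    ∃ (Z : RMod A) (g : X ⟶ Z) (h : Z ⟶ Y),
      fgMod Z ∧ f = g ≫ h ∧ ¬ IsSectionHom g ∧ ¬ IsRetractionHom h := by
  have hf := inRad_of_not_sameComp hX hY hXY f
  have hirr : ¬ Irred f := fun hi =>
    hXY (Relation.ReflTransGen.single ⟨hX, hY, Or.inr (Or.inl ⟨hX, hY, f, hi⟩)⟩)
  simp only [Irred, not_and, not_forall, not_or] at hirr
  obtain ⟨Z, hZ, g, h, hfgh, hg, hh⟩ := hirr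
    (fun ⟨r, hr⟩ => hf X hX.1 hX.2 (𝟙 X) r (by rw [Category.id_comp, hr]; infer_instance))
    (fun ⟨s, hs⟩ => hf Y hY.1 hY.2 s (𝟙 Y) (by rw [Category.comp_id, hs]; infer_instance))
  exact ⟨Z, g, h, hZ, hfgh, hg, hh⟩

end Components

section RadicalPowers

theorem RadComp.comp_inRad {n : ℕ} {X Z Y : RMod A} {c : X ⟶ Z} (hc : RadComp n c)
    (hZ : fgMod Z) {t : Z ⟶ Y} (ht : InRad t) : RadComp (n + 1) (c ≫ t) := by
  induction n generalizing X with
  | zero => exact ⟨Z, c, t, hZ, hc, ht, rfl⟩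
  | succ n ih =>
    obtain ⟨W, a, b, hW, ha, hb, rfl⟩ := hc
    exact ⟨W, a, b ≫ t, hW, ha, ih hb, Category.assoc a b t⟩

theorem InRadPow.inRad_comp {n : ℕ} {X Z Y : RMod A} {g : X ⟶ Z} (hZ : fgMod Z)
    (hg : InRad g) {c : Z ⟶ Y} (hc : InRadPow n c) : InRadPow (n + 1) (g ≫ c) := by
  induction hc using AddSubgroup.closure_induction with
  | mem x hx => exact AddSubgroup.subset_closure ⟨Z, g, x, hZ, hg, hx, rfl⟩
  | zero => rw [comp_zero]; exact zero_mem _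
  | add x y _ _ ihx ihy => rw [Preadditive.comp_add]; exact add_mem ihx ihy
  | neg x _ ihx => rw [Preadditive.comp_neg]; exact neg_mem ihx

theorem InRadPow.comp_inRad {n : ℕ} {X Z Y : RMod A} {c : X ⟶ Z} (hc : InRadPow n c)
    (hZ : fgMod Z) {t : Z ⟶ Y} (ht : InRad t) : InRadPow (n + 1) (c ≫ t) := by
  induction hc using AddSubgroup.closure_induction with
  | mem x hx => exact AddSubgroup.subset_closure (RadComp.comp_inRad hx hZ ht)
  | zero => rw [zero_comp]; exact zero_mem _
  | add x y _ _ ihx ihy => rw [Preadditive.add_comp]; exact add_mem ihx ihy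
  | neg x _ ihx => rw [Preadditive.neg_comp]; exact neg_mem ihx

end RadicalPowers

section Decomposition

theorem exists_proper_summand_of_idempotent {Z : RMod A} (W : Submodule Aᵐᵒᵖ Z)
    (u : ModuleCat.of Aᵐᵒᵖ W ⟶ ModuleCat.of Aᵐᵒᵖ W) (hu : u ≫ u = u) (hu1 : u ≠ 𝟙 _) :
    ∃ (V : Submodule Aᵐᵒᵖ Z) (π : ModuleCat.of Aᵐᵒᵖ W ⟶ ModuleCat.of Aᵐᵒᵖ V)
      (ι : ModuleCat.of Aᵐᵒᵖ V ⟶ ModuleCat.of Aᵐᵒᵖ W),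
      V < W ∧ Function.Surjective π ∧ π ≫ ι = u := by
  let R := LinearMap.range u.hom
  refine ⟨R.map W.subtype,
    ModuleCat.ofHom ((Submodule.equivSubtypeMap W R).toLinearMap ∘ₗ u.hom.rangeRestrict),
    ModuleCat.ofHom (Submodule.inclusion (Submodule.map_subtype_le W R)),
    lt_of_le_of_ne (Submodule.map_subtype_le W R) fun hRW => hu1 ?_, ?_, rfl⟩
  · have hR : R = ⊤ := Submodule.map_injective_of_injective W.injective_subtype
      (hRW.trans (Submodule.map_subtype_top W).symm)
    ext w
    obtain ⟨x, hx⟩ := LinearMap.range_eq_top.mp hR w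
    rw [← hx]
    exact congrArg Subtype.val (LinearMap.congr_fun (congrArg ModuleCat.Hom.hom hu) x)
  · exact (Submodule.equivSubtypeMap W R).surjective.comp u.hom.surjective_rangeRestrict

theorem comp_mem_of_forall_indec {X Y : RMod A} (S : AddSubgroup (X ⟶ Y))
    (hS : ∀ W : RMod A, Vertex W → ∀ (g : X ⟶ W) (h : W ⟶ Y),
      ¬ IsSectionHom g → ¬ IsRetractionHom h → g ≫ h ∈ S)
    {Z : RMod A} [IsArtinian Aᵐᵒᵖ Z] (hZ : fgMod Z) (g : X ⟶ Z) (h : Z ⟶ Y)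
    (hg : ¬ IsSectionHom g) (hh : ¬ IsRetractionHom h) : g ≫ h ∈ S := by
  suffices key : ∀ W : Submodule Aᵐᵒᵖ Z, fgMod (ModuleCat.of Aᵐᵒᵖ W) →
      ∀ (g : X ⟶ ModuleCat.of Aᵐᵒᵖ W) (h : ModuleCat.of Aᵐᵒᵖ W ⟶ Y),
      ¬ IsSectionHom g → ¬ IsRetractionHom h → g ≫ h ∈ S by
    let e : Z ≅ ModuleCat.of Aᵐᵒᵖ (⊤ : Submodule Aᵐᵒᵖ Z) :=
      Submodule.topEquiv.symm.toModuleIso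
    have : Module.Finite Aᵐᵒᵖ Z := hZ
    simpa using key ⊤ (Module.Finite.equiv Submodule.topEquiv.symm) (g ≫ e.hom) (e.inv ≫ h)
      (not_isSectionHom_comp hg _) (not_isRetractionHom_comp hh _)
  intro W
  induction W using IsArtinian.induction with
  | _ W ih =>
  intro hW g h hg hh
  by_cases hsub : Subsingleton W
  · rw [(ModuleCat.isZero_iff_subsingleton.mpr hsub).eq_zero_of_tgt g, zero_comp]
    exact zero_mem S
  by_cases hind : Indec (ModuleCat.of Aᵐᵒᵖ W)
  · exact hS _ ⟨hW, hind⟩ g h hg hh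
  obtain ⟨e, he, he0, he1⟩ : ∃ e, e ≫ e = e ∧ e ≠ 0 ∧ e ≠ 𝟙 (ModuleCat.of Aᵐᵒᵖ W) := by
    simpa [Indec, hsub] using hind
  have summand (u) (hu : u ≫ u = u) (hu1 : u ≠ 𝟙 _) : g ≫ u ≫ h ∈ S := by
    obtain ⟨V, π, ι, hVW, hπ, rfl⟩ := exists_proper_summand_of_idempotent W u hu hu1
    have : Module.Finite Aᵐᵒᵖ (ModuleCat.of Aᵐᵒᵖ W) := hW
    simpa only [Category.assoc] using ih V hVW (Module.Finite.of_surjective π.hom hπ)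
      (g ≫ π) (ι ≫ h) (not_isSectionHom_comp hg π) (not_isRetractionHom_comp hh ι)
  have hsplit : g ≫ h = g ≫ e ≫ h + g ≫ (𝟙 _ - e) ≫ h := by
    simp only [Preadditive.sub_comp, Preadditive.comp_sub, Category.id_comp, add_sub_cancel]
  rw [hsplit]
  refine add_mem (summand e he he1) (summand _ ?_ ?_)
  · simp only [Preadditive.sub_comp, Preadditive.comp_sub, Category.id_comp, Category.comp_id,
      he, sub_self, sub_zero]
  · rwa [Ne, sub_eq_self]

end Decomposition

section InfiniteRadical

variable [IsArtinianRing Aᵐᵒᵖ]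

theorem inRadPow_of_not_sameComp (n : ℕ) {X Y : RMod A} (hX : Vertex X) (hY : Vertex Y)
    (hXY : ¬ SameComp X Y) (f : X ⟶ Y) : InRadPow n f := by
  induction n generalizing X Y with
  | zero => exact AddSubgroup.subset_closure (inRad_of_not_sameComp hX hY hXY f)
  | succ n ih =>
    obtain ⟨Z, g, h, hZ, rfl, hg, hh⟩ :=
      exists_nonsplit_factorization_of_not_sameComp hX hY hXY f
    have : Module.Finite Aᵐᵒᵖ Z := hZ
    have : IsArtinian Aᵐᵒᵖ Z := isArtinian_of_fg_of_artinian'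
    refine comp_mem_of_forall_indec _ (fun W hW g h hg hh => ?_) hZ g h hg hh
    by_cases hXW : SameComp X W
    · have hWY : ¬ SameComp W Y := fun hWY => hXY (hXW.trans hWY)
      exact (ih hW hY hWY h).inRad_comp hW.1 (inRad_of_not_isSectionHom hX.2 hW.2 hg)
    · exact (ih hX hW hXW g).comp_inRad hW.1 (inRad_of_not_isRetractionHom hW.2 hY.2 hh)

theorem sigmaArrow_of_ne {C D : Set (RMod A)} (hC : IsComponent C) (hD : IsComponent D)
    (hCD : C ≠ D) {X Y : RMod A} (hX : X ∈ C) (hY : Y ∈ D) {f : X ⟶ Y} (hf : f ≠ 0) :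
    SigmaArrow C D :=
  ⟨X, hX, Y, hY, f, hf, fun n => inRadPow_of_not_sameComp n (hC.vertex_of_mem hX)
    (hD.vertex_of_mem hY) (fun h => hCD (hC.eq_of_sameComp hD hX hY h)) f⟩

end InfiniteRadical

section CompositionFactors

variable {M N : RMod A}

theorem exists_ne_zero_hom_of_projective_of_subquot [Projective M] {K Y : Submodule Aᵐᵒᵖ N}
    {w : M ⟶ ModuleCat.of Aᵐᵒᵖ (subquot K Y)} (hw : w ≠ 0) : ∃ f : M ⟶ N, f ≠ 0 := by
  have : Epi (ModuleCat.ofHom (Submodule.mkQ _) :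
      ModuleCat.of Aᵐᵒᵖ Y ⟶ ModuleCat.of Aᵐᵒᵖ (subquot K Y)) :=
    (ModuleCat.epi_iff_surjective _).mpr (Submodule.mkQ_surjective _)
  have : Mono (ModuleCat.ofHom Y.subtype : ModuleCat.of Aᵐᵒᵖ Y ⟶ N) :=
    (ModuleCat.mono_iff_injective _).mpr Y.injective_subtype
  exact exists_ne_zero_hom_of_projective (ModuleCat.ofHom (Submodule.mkQ _))
    (ModuleCat.ofHom Y.subtype) hw

theorem exists_ne_zero_hom_of_injective_of_subquot [Injective M] {K Y : Submodule Aᵐᵒᵖ N}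
    {w : ModuleCat.of Aᵐᵒᵖ (subquot K Y) ⟶ M} (hw : w ≠ 0) : ∃ f : N ⟶ M, f ≠ 0 := by
  have : Epi (ModuleCat.ofHom (Submodule.mkQ _) :
      ModuleCat.of Aᵐᵒᵖ Y ⟶ ModuleCat.of Aᵐᵒᵖ (subquot K Y)) :=
    (ModuleCat.epi_iff_surjective _).mpr (Submodule.mkQ_surjective _)
  have : Mono (ModuleCat.ofHom Y.subtype : ModuleCat.of Aᵐᵒᵖ Y ⟶ N) :=
    (ModuleCat.mono_iff_injective _).mpr Y.injective_subtype
  exact exists_ne_zero_hom_of_injective (ModuleCat.ofHom (Submodule.mkQ _))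
    (ModuleCat.ofHom Y.subtype) hw

theorem SameCF.exists_ne_zero_hom_to_subquot (h : SameCF M N) (hM : ¬ Subsingleton M) :
    ∃ (K Y : Submodule Aᵐᵒᵖ N) (w : M ⟶ ModuleCat.of Aᵐᵒᵖ (subquot K Y)), w ≠ 0 := by
  obtain ⟨n, s, t, σ, -, -, hs0, hsl, -, -, -, ht, hst⟩ := h
  rcases n with _ | m
  · exact absurd ((Submodule.subsingleton_iff _).mp (subsingleton_iff_bot_eq_top.mp
      (hs0.symm.trans hsl))) hM
  let i := Fin.last m
  have htop : s i.succ = ⊤ := by rw [Fin.succ_last]; exact hsl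
  obtain ⟨ξ⟩ := hst i
  have := ht (σ i)
  have := IsSimpleModule.nontrivial Aᵐᵒᵖ (subquot (t (σ i).castSucc) (t (σ i).succ))
  refine ⟨_, _, ModuleCat.ofHom (ξ.toLinearMap ∘ₗ Submodule.mkQ _ ∘ₗ
    (LinearEquiv.ofTop _ htop).symm.toLinearMap), ModuleCat.ofHom_ne_zero ?_⟩
  exact LinearMap.ne_zero_of_surjective (ξ.surjective.comp
    ((Submodule.mkQ_surjective _).comp (LinearEquiv.ofTop _ htop).symm.surjective))

theorem SameCF.exists_ne_zero_hom_from_subquot (h : SameCF M N) (hM : ¬ Subsingleton M) :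
    ∃ (K Y : Submodule Aᵐᵒᵖ N) (w : ModuleCat.of Aᵐᵒᵖ (subquot K Y) ⟶ M), w ≠ 0 := by
  obtain ⟨n, s, t, σ, -, -, hs0, hsl, -, -, -, ht, hst⟩ := h
  rcases n with _ | m
  · exact absurd ((Submodule.subsingleton_iff _).mp (subsingleton_iff_bot_eq_top.mp
      (hs0.symm.trans hsl))) hM
  let i : Fin (m + 1) := 0
  have hbot : Submodule.comap (s i.succ).subtype (s i.castSucc) = ⊥ := by
    rw [Fin.castSucc_zero', hs0, Submodule.comap_bot, Submodule.ker_subtype]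
  obtain ⟨ξ⟩ := hst i
  have := ht (σ i)
  have := IsSimpleModule.nontrivial Aᵐᵒᵖ (subquot (t (σ i).castSucc) (t (σ i).succ))
  refine ⟨_, _, ModuleCat.ofHom ((s i.succ).subtype ∘ₗ
    (Submodule.quotEquivOfEqBot _ hbot).toLinearMap ∘ₗ ξ.symm.toLinearMap),
    ModuleCat.ofHom_ne_zero ?_⟩
  exact LinearMap.ne_zero_of_injective ((s i.succ).injective_subtype.comp
    ((Submodule.quotEquivOfEqBot _ hbot).injective.comp ξ.symm.injective))

end CompositionFactors

end ARTheory

open ARTheory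

/-- **Step (1).** Let `A` be an artin algebra, and `𝒞`, `𝒟` components of `Γ_A`
with the same composition factors such that `𝒞 ≠ 𝒟` and `𝒞` does not lie on a
short cycle in the component quiver `Σ_A`. Then `𝒞` is a semi-regular component
of `Γ_A`, i.e. `𝒞` does not contain both a projective module and an injective
module. -/
theorem component_is_semiregular
    (R A : Type) [CommRing R] [IsArtinianRing R] [Ring A] [Algebra R A] [Module.Finite R A]
    (C D : Set (RMod A)) (hC : IsComponent C) (hD : IsComponent D)
    (hsame : ComponentsSameCF C D) (hne : C ≠ D)
    (hnocycle : ¬ OnShortCycleSigma C) :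
    SemiRegular C := by
  have : IsArtinianRing Aᵐᵒᵖ := IsArtinianRing.of_finite R Aᵐᵒᵖ
  rintro ⟨⟨P, hPC, hP⟩, ⟨I, hIC, hI⟩⟩
  obtain ⟨N, hND, hPN⟩ := hsame.1 P hPC
  obtain ⟨N', hN'D, hIN'⟩ := hsame.1 I hIC
  obtain ⟨K, Y, w, hw⟩ := hPN.exists_ne_zero_hom_to_subquot (hC.vertex_of_mem hPC).2.1
  obtain ⟨K', Y', w', hw'⟩ := hIN'.exists_ne_zero_hom_from_subquot (hC.vertex_of_mem hIC).2.1
  obtain ⟨u, hu⟩ := exists_ne_zero_hom_of_projective_of_subquot hw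
  obtain ⟨v, hv⟩ := exists_ne_zero_hom_of_injective_of_subquot hw'
  exact hnocycle ⟨D, hD, sigmaArrow_of_ne hC hD hne hPC hND hu,
    sigmaArrow_of_ne hD hC hne.symm hN'D hIC hv⟩
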